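/- Hamiltonicity of d̲-symmetries (abstract algebraic core): in a setting with operators satisfying Cartan calculus, if 𝕃_X(L,ℓ̄) = d̲(S,s̄) and 𝕕(L,ℓ̄) = (E,b̄)∧𝕕φ + d̲(Θ,θ̄), then defining the current (J, j̄) := (S,s̄) − ı̲_X(Θ,θ̄), one has d̲(J,j̄) = (E,b̄)·𝕃_X φ; in particular the current is relatively closed on solutions where (E,b̄) = 0 and 𝕃_X preserves the solution condition. -/
import Mathlib

/-- Hamiltonicity of `d̲`-symmetries — abstract algebraic core.
`W` models the relative variational bicomplex over `(M,∂_L M) × F` (pairs collapsed into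
one algebra, wedge given by multiplication); `d` is the relative horizontal differential
`d̲`, `dv` the vertical differential `𝕕`, `iX = ı̲_X` and `LX = 𝕃_X` for a field-space
vector field `X`, with vertical Cartan formula `𝕃_X = ı̲_X 𝕕 + 𝕕 ı̲_X` and commutations
`d̲𝕕 = 𝕕d̲`, `d̲ ı̲_X = ı̲_X d̲`.  `L` stands for `(L,ℓ̄)`, `S` for `(S,s̄)`, `Θ` for
`(Θ,θ̄)`, `E` for `(E,b̄)` and `φ` for the field coordinate; `ı̲_X L = 0`, `ı̲_X E = 0`,
`ı̲_X φ = 0` (they have vertical degree 0), and `ı̲_X` obeys the (unsigned) Leibniz rule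
on `E∧𝕕φ`.  If `𝕃_X(L,ℓ̄) = d̲(S,s̄)` and `𝕕(L,ℓ̄) = (E,b̄)∧𝕕φ + d̲(Θ,θ̄)`, then the
current `(J,j̄) := (S,s̄) − ı̲_X(Θ,θ̄)` satisfies `d̲(J,j̄) = (E,b̄)·𝕃_X φ`; in
particular it is relatively closed on solutions, where `(E,b̄) = 0`. -/
theorem dsymmetry_current_relatively_closed
    (W : Type*) [Ring W] [Algebra ℝ W]
    (d dv iX LX : W →ₗ[ℝ] W)
    (hCartan : ∀ w, LX w = iX (dv w) + dv (iX w))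
    (hddv : ∀ w, d (dv w) = dv (d w))
    (hdi : ∀ w, d (iX w) = iX (d w))
    (L S Θ E φ : W)
    (hiL : iX L = 0)
    (hiE : iX E = 0)
    (hiφ : iX φ = 0)
    (hLeib : iX (E * dv φ) = iX E * dv φ + E * iX (dv φ))
    (hsym : LX L = d S)
    (hvar : dv L = E * dv φ + d Θ) :
    d (S - iX Θ) = E * LX φ := by
  have hLXφ : LX φ = iX (dv φ) := by rw [hCartan, hiφ, map_zero, add_zero]
  have hdS : d S = E * iX (dv φ) + iX (d Θ) := by
    rw [← hsym, hCartan, hiL, map_zero, add_zero, hvar, map_add, hLeib,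
      hiE, zero_mul, zero_add]
  rw [map_sub, hdS, hdi, hLXφ]
  exact add_sub_cancel_right _ _
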